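/- arXiv:2503.22898 — 4 statements merged into one kernel-verified Lean document; each statement's English description precedes it below -/
import Mathlib

section
/- Let γ > 0, n ∈ ℕ, and fix w ∈ 𝔻. Define l_i(z) = (1-|w|²)^i / (1 - conj(w)·z)^{γ+i-1} for i = 1,2,3, and set f_w = (γ+n+2)/(γ+n) · ∏_{j=0}^{n-1}(γ+j+1)(γ+j+2) · l₁ − 2(γ+n+2)/(γ+n+1) · ∏_{j=0}^{n-1}(γ+j)(γ+j+2) · l₂ + ∏_{j=0}^{n-1}(γ+j)(γ+j+1) · l₃. Then f_w^{(n+1)}(w) = 0 and f_w^{(n+2)}(w) = 0. -/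
/-!
With `t = 1 - |w|²` we have `1 - conj w · w = t`, and `l_i(z) = t^i (1 - conj w · z)^{-(γ+i-1)}`.
Hence `l_i^{(k)}(w) = (γ+i-1)_k (conj w)^k t^{1-γ-k}` with the rising factorial `(s)_k`: the
factor `t^i` cancels, so `f_w^{(k)}(w)` is `(conj w)^k t^{1-γ-k}` times a fixed combination of
`(γ)_k, (γ+1)_k, (γ+2)_k`. After dividing by `(γ)_n (γ+1)_n (γ+2)_n` this combination is
`(γ+n+2)(1 - 2 + 1) = 0` for `k = n+1` and `(γ+n+2)((γ+n+1) - 2(γ+n+2) + (γ+n+3)) = 0`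
for `k = n+2`.
-/

open Complex Metric Finset

/-- The kernel `l_i(z) = (1-|w|²)^i / (1 - conj w · z)^(γ+i-1)`. -/
noncomputable def lKernel (w : ℂ) (γ : ℝ) (i : ℕ) (z : ℂ) : ℂ :=
  ((1 - ‖w‖ ^ 2 : ℝ) : ℂ) ^ i / (1 - (starRingEnd ℂ) w * z) ^ ((γ : ℂ) + i - 1)

/-- The test function `f_w`. -/
noncomputable def fTest (w : ℂ) (γ : ℝ) (n : ℕ) (z : ℂ) : ℂ :=
  ((γ : ℂ) + n + 2) / ((γ : ℂ) + n) *
      (∏ j ∈ range n, (((γ : ℂ) + j + 1) * ((γ : ℂ) + j + 2))) * lKernel w γ 1 z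
  - 2 * ((γ : ℂ) + n + 2) / ((γ : ℂ) + n + 1) *
      (∏ j ∈ range n, (((γ : ℂ) + j) * ((γ : ℂ) + j + 2))) * lKernel w γ 2 z
  + (∏ j ∈ range n, (((γ : ℂ) + j) * ((γ : ℂ) + j + 1))) * lKernel w γ 3 z

theorem iteratedDeriv_one_sub_mul_cpow_neg (a s : ℂ) (k : ℕ) {z : ℂ}
    (hz : 1 - a * z ∈ slitPlane) :
    iteratedDeriv k (fun z => (1 - a * z) ^ (-s)) z
      = (∏ j ∈ range k, (s + j)) * a ^ k * (1 - a * z) ^ (-s - k) := by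
  induction k generalizing z with
  | zero => simp
  | succ k ih =>
    have hU : IsOpen {z : ℂ | 1 - a * z ∈ slitPlane} :=
      isOpen_slitPlane.preimage (by fun_prop)
    have hlin : HasDerivAt (fun z : ℂ => 1 - a * z) (-a) z := by
      simpa using ((hasDerivAt_id z).const_mul a).const_sub 1
    have hderiv := ((hlin.cpow_const (c := -s - k) hz).const_mul
      ((∏ j ∈ range k, (s + j)) * a ^ k))
    have hev : iteratedDeriv k (fun z => (1 - a * z) ^ (-s)) =ᶠ[nhds z]
        fun z => (∏ j ∈ range k, (s + j)) * a ^ k * (1 - a * z) ^ (-s - k) :=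
      Filter.eventually_of_mem (hU.mem_nhds hz) fun y hy => ih hy
    rw [iteratedDeriv_succ, hev.deriv_eq, hderiv.deriv, prod_range_succ,
      show -s - k - 1 = -s - ((k + 1 : ℕ) : ℂ) by push_cast; ring]
    ring

theorem one_sub_conj_mul_self (w : ℂ) :
    1 - (starRingEnd ℂ) w * w = ((1 - ‖w‖ ^ 2 : ℝ) : ℂ) := by
  rw [conj_mul']
  push_cast
  ring

theorem one_sub_conj_mul_self_mem_slitPlane {w : ℂ} (hw : ‖w‖ < 1) :
    1 - (starRingEnd ℂ) w * w ∈ slitPlane := by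
  rw [one_sub_conj_mul_self, ofReal_mem_slitPlane]
  nlinarith [norm_nonneg w]

theorem lKernel_eq (w : ℂ) (γ : ℝ) (i : ℕ) :
    lKernel w γ i = fun z =>
      ((1 - ‖w‖ ^ 2 : ℝ) : ℂ) ^ i * (1 - (starRingEnd ℂ) w * z) ^ (-((γ : ℂ) + i - 1)) := by
  funext z
  rw [lKernel, div_eq_mul_inv, cpow_neg]

theorem iteratedDeriv_lKernel_self {w : ℂ} (hw : ‖w‖ < 1) (γ : ℝ) (i k : ℕ) :
    iteratedDeriv k (lKernel w γ i) w
      = (∏ j ∈ range k, ((γ : ℂ) + i - 1 + j)) * (starRingEnd ℂ) w ^ k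
        * ((1 - ‖w‖ ^ 2 : ℝ) : ℂ) ^ (1 - (γ : ℂ) - k) := by
  have ht : ((1 - ‖w‖ ^ 2 : ℝ) : ℂ) ≠ 0 := by
    rw [← one_sub_conj_mul_self]
    exact slitPlane_ne_zero (one_sub_conj_mul_self_mem_slitPlane hw)
  rw [lKernel_eq, iteratedDeriv_const_mul_field,
    iteratedDeriv_one_sub_mul_cpow_neg _ _ _ (one_sub_conj_mul_self_mem_slitPlane hw),
    one_sub_conj_mul_self, ← cpow_natCast]
  calc _ = (∏ j ∈ range k, ((γ : ℂ) + i - 1 + j)) * (starRingEnd ℂ) w ^ k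
        * (((1 - ‖w‖ ^ 2 : ℝ) : ℂ) ^ (i : ℂ)
          * ((1 - ‖w‖ ^ 2 : ℝ) : ℂ) ^ (-((γ : ℂ) + i - 1) - k)) := by ring
    _ = _ := by rw [← cpow_add _ _ ht]; ring_nf

theorem contDiffAt_lKernel {w : ℂ} (hw : ‖w‖ < 1) (γ : ℝ) (i : ℕ) (m : WithTop ℕ∞) :
    ContDiffAt ℂ m (lKernel w γ i) w := by
  rw [lKernel_eq]
  apply AnalyticAt.contDiffAt
  exact analyticAt_const.mul ((analyticAt_const.sub (analyticAt_const.mul analyticAt_id)).cpow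
    analyticAt_const (one_sub_conj_mul_self_mem_slitPlane hw))

noncomputable def fTestDerivCoeff (γ : ℂ) (n k : ℕ) : ℂ :=
  (γ + n + 2) / (γ + n) * (∏ j ∈ range n, ((γ + j + 1) * (γ + j + 2))) * ∏ j ∈ range k, (γ + j)
  - 2 * (γ + n + 2) / (γ + n + 1) * (∏ j ∈ range n, ((γ + j) * (γ + j + 2)))
      * ∏ j ∈ range k, (γ + j + 1)
  + (∏ j ∈ range n, ((γ + j) * (γ + j + 1))) * ∏ j ∈ range k, (γ + j + 2)

theorem iteratedDeriv_fTest_self {w : ℂ} (hw : ‖w‖ < 1) (γ : ℝ) (n k : ℕ) :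
    iteratedDeriv k (fTest w γ n) w
      = fTestDerivCoeff γ n k * (starRingEnd ℂ) w ^ k
        * ((1 - ‖w‖ ^ 2 : ℝ) : ℂ) ^ (1 - (γ : ℂ) - k) := by
  have hl := contDiffAt_lKernel hw γ (m := k)
  unfold fTest
  have hc (c : ℂ) (i : ℕ) := contDiffAt_const (c := c).mul (hl i)
  rw [iteratedDeriv_fun_add ((hc _ 1).sub (hc _ 2)) (hc _ 3),
    iteratedDeriv_fun_sub (hc _ 1) (hc _ 2)]
  simp only [iteratedDeriv_const_mul_field, iteratedDeriv_lKernel_self hw, fTestDerivCoeff]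
  -- `ring_nf` also normalises the factors `γ + i - 1 + j` inside the products.
  ring_nf

theorem fTestDerivCoeff_eq_zero {γ : ℂ} {n k : ℕ} (h₀ : γ + n ≠ 0) (h₁ : γ + n + 1 ≠ 0)
    (hk : k = n + 1 ∨ k = n + 2) : fTestDerivCoeff γ n k = 0 := by
  unfold fTestDerivCoeff
  simp only [prod_mul_distrib]
  rcases hk with rfl | rfl <;> simp only [prod_range_succ] <;> field_simp <;> ring

theorem fTest_higher_derivs_vanish (γ : ℝ) (hγ : 0 < γ) (n : ℕ) (w : ℂ)
    (hw : w ∈ ball (0:ℂ) 1) :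
    iteratedDeriv (n + 1) (fTest w γ n) w = 0 ∧
    iteratedDeriv (n + 2) (fTest w γ n) w = 0 := by
  have hw' : ‖w‖ < 1 := mem_ball_zero_iff.mp hw
  have h₀ : (γ : ℂ) + n ≠ 0 := by exact_mod_cast (by positivity : γ + n ≠ 0)
  have h₁ : (γ : ℂ) + n + 1 ≠ 0 := by exact_mod_cast (by positivity : γ + n + 1 ≠ 0)
  simp only [iteratedDeriv_fTest_self hw', fTestDerivCoeff_eq_zero h₀ h₁ (.inl rfl),
    fTestDerivCoeff_eq_zero h₀ h₁ (.inr rfl), zero_mul, and_self]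
end

section
/- Suppose the Stević–Sharma type operator T^n_{ψ₁,ψ₂,φ}: f ↦ ψ₁·(f^{(n)}∘φ) + ψ₂·(f^{(n+1)}∘φ) is bounded from a Banach space X of analytic functions on 𝔻 containing all polynomials into the weighted Bloch space B_μ. Then sup_{z∈𝔻} μ(z)|ψ₁'(z)| < ∞, sup_{z∈𝔻} μ(z)|ψ₁(z)φ'(z) + ψ₂'(z)| < ∞, and sup_{z∈𝔻} μ(z)|ψ₂(z)φ'(z)| < ∞. -/
/-!
Applying `T` to `z ^ (n + j)` gives `(n + j)! / j!` times `ψ₁ φ ^ j + j ψ₂ φ ^ (j - 1)`.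
For `j = 0, 1, 2` the derivatives of these are `A`, `A φ + B` and `A φ ² + 2 φ B + 2 D`,
where `A = ψ₁'`, `B = ψ₁ φ' + ψ₂'` and `D = ψ₂ φ'`, and boundedness of `T` bounds each of them
after multiplication by `μ`. Since `|φ| ≤ 1`, the triangle inequality then bounds
`μ |A|`, `μ |B|` and `μ |D|` in turn.
-/

open Complex Metric Set

noncomputable def stevicSharma (ψ₁ ψ₂ φ : ℂ → ℂ) (n : ℕ) (g : ℂ → ℂ) (z : ℂ) : ℂ :=
  ψ₁ z * iteratedDeriv n g (φ z) + ψ₂ z * iteratedDeriv (n + 1) g (φ z)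

/-- `stevicSharma ψ₁ ψ₂ φ n (· ^ (n + j))` up to the factor `(n + j).descFactorial n`; the
truncated `j - 1` only matters for `j = 0`, where its coefficient vanishes. -/
noncomputable def stevicSharmaMonomial (ψ₁ ψ₂ φ : ℂ → ℂ) (j : ℕ) (z : ℂ) : ℂ :=
  ψ₁ z * φ z ^ j + j * ψ₂ z * φ z ^ (j - 1)

section

variable (ψ₁ ψ₂ φ : ℂ → ℂ)

theorem stevicSharma_pow_add (n j : ℕ) :
    stevicSharma ψ₁ ψ₂ φ n (· ^ (n + j)) =
      fun z => ((n + j).descFactorial n : ℂ) * stevicSharmaMonomial ψ₁ ψ₂ φ j z := by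
  funext z
  simp only [stevicSharma, stevicSharmaMonomial, iteratedDeriv_pow, Nat.descFactorial_succ,
    Nat.add_sub_cancel_left, show n + j - (n + 1) = j - 1 by omega]
  push_cast
  ring

theorem mul_norm_deriv_stevicSharmaMonomial_le {n j : ℕ} {z : ℂ} {m K : ℝ}
    (h : m * ‖deriv (stevicSharma ψ₁ ψ₂ φ n (· ^ (n + j))) z‖ ≤ K) :
    m * ‖deriv (stevicSharmaMonomial ψ₁ ψ₂ φ j) z‖ ≤ K / (n + j).descFactorial n := by
  have hpos : (0 : ℝ) < (n + j).descFactorial n := by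
    exact_mod_cast Nat.descFactorial_pos.2 (Nat.le_add_right n j)
  rw [stevicSharma_pow_add, deriv_const_mul_field', norm_mul, norm_natCast] at h
  rw [le_div_iff₀ hpos]
  linarith

theorem exists_mul_norm_deriv_stevicSharmaMonomial_le {X : Type*} [Norm X] (ι : X → ℂ → ℂ)
    (hpoly : ∀ k : ℕ, ∃ p : X, ι p = fun z : ℂ => z ^ k) (n : ℕ) (μ : ℂ → ℝ) (s : Set ℂ)
    (hbdd : ∃ C : ℝ, ∀ f : X, ∀ z ∈ s,
      μ z * ‖deriv (stevicSharma ψ₁ ψ₂ φ n (ι f)) z‖ ≤ C * ‖f‖) (j : ℕ) :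
    ∃ K : ℝ, ∀ z ∈ s, μ z * ‖deriv (stevicSharmaMonomial ψ₁ ψ₂ φ j) z‖ ≤ K := by
  obtain ⟨C, hC⟩ := hbdd
  obtain ⟨p, hp⟩ := hpoly (n + j)
  refine ⟨C * ‖p‖ / (n + j).descFactorial n, fun z hz => ?_⟩
  apply mul_norm_deriv_stevicSharmaMonomial_le
  simpa only [hp] using hC p z hz

variable {ψ₁ ψ₂ φ}

theorem hasDerivAt_stevicSharmaMonomial {z : ℂ} (hψ₁ : DifferentiableAt ℂ ψ₁ z)
    (hψ₂ : DifferentiableAt ℂ ψ₂ z) (hφ : DifferentiableAt ℂ φ z) (j : ℕ) :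
    HasDerivAt (stevicSharmaMonomial ψ₁ ψ₂ φ j)
      (deriv ψ₁ z * φ z ^ j + j * φ z ^ (j - 1) * (ψ₁ z * deriv φ z + deriv ψ₂ z) +
        j * (j - 1 : ℕ) * φ z ^ (j - 2) * (ψ₂ z * deriv φ z)) z := by
  refine HasDerivAt.congr_deriv (f := stevicSharmaMonomial ψ₁ ψ₂ φ j)
    ((hψ₁.hasDerivAt.fun_mul (hφ.hasDerivAt.fun_pow j)).fun_add
      ((hψ₂.hasDerivAt.const_mul (j : ℂ)).fun_mul (hφ.hasDerivAt.fun_pow (j - 1)))) ?_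
  rw [Nat.sub_sub]
  ring

end

section

variable {m K₀ K₁ : ℝ}

theorem mul_norm_le_of_mul_norm_mul_add_le {𝕜 : Type*} [NormedRing 𝕜] {A B w : 𝕜}
    (hm : 0 ≤ m) (hw : ‖w‖ ≤ 1) (hA : m * ‖A‖ ≤ K₀) (hAB : m * ‖A * w + B‖ ≤ K₁) :
    m * ‖B‖ ≤ K₁ + K₀ := by
  have hB : ‖B‖ ≤ ‖A * w + B‖ + ‖A‖ :=
    calc ‖B‖ = ‖(A * w + B) - A * w‖ := by rw [add_sub_cancel_left]
      _ ≤ ‖A * w + B‖ + ‖A‖ * ‖w‖ := (norm_sub_le _ _).trans (by gcongr; exact norm_mul_le _ _)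
      _ ≤ ‖A * w + B‖ + ‖A‖ := by gcongr; exact mul_le_of_le_one_right (norm_nonneg _) hw
  nlinarith [mul_le_mul_of_nonneg_left hB hm]

theorem mul_norm_le_of_mul_norm_mul_sq_add_le {𝕜 : Type*} [RCLike 𝕜] {K₂ : ℝ} {A B D w : 𝕜}
    (hm : 0 ≤ m) (hw : ‖w‖ ≤ 1) (hA : m * ‖A‖ ≤ K₀) (hB : m * ‖B‖ ≤ K₁)
    (hABD : m * ‖A * w ^ 2 + 2 * w * B + 2 * D‖ ≤ K₂) :
    m * ‖D‖ ≤ (K₂ + K₀ + 2 * K₁) / 2 := by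
  have hw₂ : ‖w‖ ^ 2 ≤ 1 := pow_le_one₀ (norm_nonneg w) hw
  have hD : 2 * ‖D‖ ≤ ‖A * w ^ 2 + 2 * w * B + 2 * D‖ + ‖A‖ + 2 * ‖B‖ :=
    calc 2 * ‖D‖ = ‖(A * w ^ 2 + 2 * w * B + 2 * D) - A * w ^ 2 - 2 * w * B‖ := by
          rw [← RCLike.norm_two (K := 𝕜), ← norm_mul]; ring_nf
      _ ≤ ‖A * w ^ 2 + 2 * w * B + 2 * D‖ + ‖A * w ^ 2‖ + ‖2 * w * B‖ :=
          (norm_sub_le _ _).trans (add_le_add_left (norm_sub_le _ _) _)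
      _ ≤ ‖A * w ^ 2 + 2 * w * B + 2 * D‖ + ‖A‖ + 2 * ‖B‖ := by
          simp only [norm_mul, norm_pow, RCLike.norm_two]
          gcongr
          · exact mul_le_of_le_one_right (norm_nonneg _) hw₂
          · linarith
  nlinarith [mul_le_mul_of_nonneg_left hD hm]

end

theorem stevic_sharma_bounded_necessary_general
    (X : Type*) [NormedAddCommGroup X] [NormedSpace ℂ X]
    (ι : X →ₗ[ℂ] (ℂ → ℂ))
    (hpoly : ∀ k : ℕ, ∃ p : X, ι p = fun z : ℂ => z ^ k)
    (ψ₁ ψ₂ φ : ℂ → ℂ)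
    (hψ₁ : DifferentiableOn ℂ ψ₁ (ball (0:ℂ) 1))
    (hψ₂ : DifferentiableOn ℂ ψ₂ (ball (0:ℂ) 1))
    (hφ : DifferentiableOn ℂ φ (ball (0:ℂ) 1))
    (hφself : ∀ z ∈ ball (0:ℂ) 1, φ z ∈ ball (0:ℂ) 1)
    (n : ℕ) (μ : ℂ → ℝ) (hμpos : ∀ z ∈ ball (0:ℂ) 1, 0 < μ z)
    -- boundedness of `T : X → B_μ`, where
    -- `(T f)(z) = ψ₁(z) f^{(n)}(φ(z)) + ψ₂(z) f^{(n+1)}(φ(z))`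
    (hbdd : ∃ C : ℝ, ∀ f : X, ∀ z ∈ ball (0:ℂ) 1,
      Norm.norm (ψ₁ 0 * iteratedDeriv n (ι f) (φ 0) +
          ψ₂ 0 * iteratedDeriv (n + 1) (ι f) (φ 0)) +
        μ z * Norm.norm (deriv (fun z => ψ₁ z * iteratedDeriv n (ι f) (φ z) +
          ψ₂ z * iteratedDeriv (n + 1) (ι f) (φ z)) z) ≤ C * ‖f‖) :
    BddAbove ((fun z => μ z * Norm.norm (deriv ψ₁ z)) '' ball (0:ℂ) 1) ∧
    BddAbove ((fun z => μ z * Norm.norm (ψ₁ z * deriv φ z + deriv ψ₂ z)) '' ball (0:ℂ) 1) ∧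
    BddAbove ((fun z => μ z * Norm.norm (ψ₂ z * deriv φ z)) '' ball (0:ℂ) 1) := by
  have hmono := exists_mul_norm_deriv_stevicSharmaMonomial_le ψ₁ ψ₂ φ ι hpoly n μ _
    (hbdd.imp fun C hC f z hz => (le_add_of_nonneg_left (norm_nonneg _)).trans (hC f z hz))
  obtain ⟨K₀, hK₀⟩ := hmono 0
  obtain ⟨K₁, hK₁⟩ := hmono 1
  obtain ⟨K₂, hK₂⟩ := hmono 2
  have hbounds : ∀ z ∈ ball (0:ℂ) 1, μ z * ‖deriv ψ₁ z‖ ≤ K₀ ∧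
      μ z * ‖ψ₁ z * deriv φ z + deriv ψ₂ z‖ ≤ K₁ + K₀ ∧
      μ z * ‖ψ₂ z * deriv φ z‖ ≤ (K₂ + K₀ + 2 * (K₁ + K₀)) / 2 := by
    intro z hz
    have hμ : 0 ≤ μ z := (hμpos z hz).le
    have hw : ‖φ z‖ ≤ 1 := (mem_ball_zero_iff.1 (hφself z hz)).le
    have hz' := isOpen_ball.mem_nhds hz
    have hd := hasDerivAt_stevicSharmaMonomial (hψ₁.differentiableAt hz')
      (hψ₂.differentiableAt hz') (hφ.differentiableAt hz')
    have hA : μ z * ‖deriv ψ₁ z‖ ≤ K₀ := by simpa [(hd 0).deriv] using hK₀ z hz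
    have hAB := hK₁ z hz
    have hABD := hK₂ z hz
    norm_num [(hd 1).deriv] at hAB
    norm_num [(hd 2).deriv] at hABD
    have hB := mul_norm_le_of_mul_norm_mul_add_le hμ hw hA hAB
    exact ⟨hA, hB, mul_norm_le_of_mul_norm_mul_sq_add_le hμ hw hA hB hABD⟩
  exact ⟨⟨_, forall_mem_image.2 fun z hz => (hbounds z hz).1⟩,
    ⟨_, forall_mem_image.2 fun z hz => (hbounds z hz).2.1⟩,
    ⟨_, forall_mem_image.2 fun z hz => (hbounds z hz).2.2⟩⟩

/-- If the Stević–Sharma type operator `T^n_{ψ₁,ψ₂,φ}` is bounded from a Banach space `X`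
of analytic functions containing the polynomials into the weighted Bloch space `B_μ`, then
`μ|ψ₁'|`, `μ|ψ₁φ' + ψ₂'|` and `μ|ψ₂φ'|` are bounded on the disc. -/
theorem stevic_sharma_bounded_necessary
    (X : Type*) [NormedAddCommGroup X] [NormedSpace ℂ X] [CompleteSpace X]
    (ι : X →ₗ[ℂ] (ℂ → ℂ))
    (hana : ∀ f : X, DifferentiableOn ℂ (ι f) (ball (0:ℂ) 1))
    (hpoly : ∀ k : ℕ, ∃ p : X, ι p = fun z : ℂ => z ^ k)
    (ψ₁ ψ₂ φ : ℂ → ℂ)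
    (hψ₁ : DifferentiableOn ℂ ψ₁ (ball (0:ℂ) 1))
    (hψ₂ : DifferentiableOn ℂ ψ₂ (ball (0:ℂ) 1))
    (hφ : DifferentiableOn ℂ φ (ball (0:ℂ) 1))
    (hφself : ∀ z ∈ ball (0:ℂ) 1, φ z ∈ ball (0:ℂ) 1)
    (n : ℕ) (μ : ℂ → ℝ) (hμpos : ∀ z ∈ ball (0:ℂ) 1, 0 < μ z)
    (hμbd : ∃ Cμ : ℝ, ∀ z ∈ ball (0:ℂ) 1, μ z ≤ Cμ)
    -- boundedness of `T : X → B_μ`, where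
    -- `(T f)(z) = ψ₁(z) f^{(n)}(φ(z)) + ψ₂(z) f^{(n+1)}(φ(z))`
    (hbdd : ∃ C : ℝ, ∀ f : X, ∀ z ∈ ball (0:ℂ) 1,
      Norm.norm (ψ₁ 0 * iteratedDeriv n (ι f) (φ 0) +
          ψ₂ 0 * iteratedDeriv (n + 1) (ι f) (φ 0)) +
        μ z * Norm.norm (deriv (fun z => ψ₁ z * iteratedDeriv n (ι f) (φ z) +
          ψ₂ z * iteratedDeriv (n + 1) (ι f) (φ z)) z) ≤ C * ‖f‖) :
    BddAbove ((fun z => μ z * Norm.norm (deriv ψ₁ z)) '' ball (0:ℂ) 1) ∧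
    BddAbove ((fun z => μ z * Norm.norm (ψ₁ z * deriv φ z + deriv ψ₂ z)) '' ball (0:ℂ) 1) ∧
    BddAbove ((fun z => μ z * Norm.norm (ψ₂ z * deriv φ z)) '' ball (0:ℂ) 1) :=
  stevic_sharma_bounded_necessary_general X ι hpoly ψ₁ ψ₂ φ hψ₁ hψ₂ hφ hφself n μ hμpos hbdd
end

section
/- Let ψ₁, ψ₂ be analytic on 𝔻, φ an analytic self-map of 𝔻 with ρ = sup_{z∈𝔻}|φ(z)| < 1, n ∈ ℕ, and μ a positive weight with sup_{z∈𝔻} μ(z)|ψ₁'(z)| < ∞, sup_{z∈𝔻} μ(z)|ψ₁(z)φ'(z)+ψ₂'(z)| < ∞, sup_{z∈𝔻} μ(z)|ψ₂(z)φ'(z)| < ∞. If {f_i} is a sequence of analytic functions on 𝔻, uniformly bounded on the closed disc of radius (1+ρ)/2 and converging to 0 uniformly on compact subsets of 𝔻, then ‖T^n_{ψ₁,ψ₂,φ} f_i‖_{B_μ} → 0 as i → ∞, where (T^n_{ψ₁,ψ₂,φ} f)(z) = ψ₁(z) f^{(n)}(φ(z)) + ψ₂(z) f^{(n+1)}(φ(z)).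 -/
open Complex Metric Set Filter

/-!
Since `ρ < 1`, the symbol `φ` maps `𝔻` into the compact disc `closedBall 0 ρ ⊆ 𝔻`, on which every
derivative `f_i^{(k)}` tends to `0` uniformly (Weierstrass). By the chain rule
`(T f)' = ψ₁' · f^{(n)} ∘ φ + (ψ₁ φ' + ψ₂') · f^{(n+1)} ∘ φ + ψ₂ φ' · f^{(n+2)} ∘ φ`,
and the three coefficients are bounded after multiplication by `μ`, so `μ |(T f_i)'| → 0`
uniformly on `𝔻`; the value `(T f_i)(0)` tends to `0` for the same reason.
-/

section Weierstrass

variable {E : Type*} [NormedAddCommGroup E] [NormedSpace ℂ E] [CompleteSpace E] {U : Set ℂ}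

theorem DifferentiableOn.iteratedDeriv_of_isOpen {f : ℂ → E} (hf : DifferentiableOn ℂ f U)
    (hU : IsOpen U) (k : ℕ) : DifferentiableOn ℂ (iteratedDeriv k f) U := by
  induction k with
  | zero => simpa using hf
  | succ k ih => simpa only [iteratedDeriv_succ] using ih.deriv hU

theorem TendstoLocallyUniformlyOn.iteratedDeriv {ι : Type*} {l : Filter ι} {F : ι → ℂ → E}
    {f : ℂ → E} (hFf : TendstoLocallyUniformlyOn F f l U)
    (hF : ∀ᶠ i in l, DifferentiableOn ℂ (F i) U) (hU : IsOpen U) (k : ℕ) :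
    TendstoLocallyUniformlyOn (fun i => iteratedDeriv k (F i)) (iteratedDeriv k f) l U := by
  induction k with
  | zero => simpa using hFf
  | succ k ih =>
    simpa only [iteratedDeriv_succ, Function.comp_def] using
      ih.deriv (hF.mono fun i hi => hi.iteratedDeriv_of_isOpen hU k) hU

theorem eventually_forall_norm_iteratedDeriv_lt {ι : Type*} {l : Filter ι} {F : ι → ℂ → E}
    (hF0 : TendstoLocallyUniformlyOn F 0 l U) (hF : ∀ᶠ i in l, DifferentiableOn ℂ (F i) U)
    (hU : IsOpen U) {K : Set ℂ} (hK : IsCompact K) (hKU : K ⊆ U) (k : ℕ) {δ : ℝ} (hδ : 0 < δ) :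
    ∀ᶠ i in l, ∀ w ∈ K, ‖iteratedDeriv k (F i) w‖ < δ := by
  have hunif := (tendstoLocallyUniformlyOn_iff_forall_isCompact hU).1
    (hF0.iteratedDeriv hF hU k) K hKU hK
  simpa using Metric.tendstoUniformlyOn_iff.1 hunif δ hδ

end Weierstrass

section StevicSharma

noncomputable def stevicSharmaOp (n : ℕ) (ψ₁ ψ₂ φ f : ℂ → ℂ) (z : ℂ) : ℂ :=
  ψ₁ z * iteratedDeriv n f (φ z) + ψ₂ z * iteratedDeriv (n + 1) f (φ z)

variable {n : ℕ} {ψ₁ ψ₂ φ f : ℂ → ℂ} {z : ℂ}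

theorem norm_stevicSharmaOp_le :
    ‖stevicSharmaOp n ψ₁ ψ₂ φ f z‖ ≤
      ‖ψ₁ z‖ * ‖iteratedDeriv n f (φ z)‖ + ‖ψ₂ z‖ * ‖iteratedDeriv (n + 1) f (φ z)‖ :=
  (norm_add_le _ _).trans_eq (by rw [norm_mul, norm_mul])

theorem deriv_stevicSharmaOp (hψ₁ : DifferentiableAt ℂ ψ₁ z) (hψ₂ : DifferentiableAt ℂ ψ₂ z)
    (hφ : DifferentiableAt ℂ φ z) (hfn : DifferentiableAt ℂ (iteratedDeriv n f) (φ z))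
    (hfn' : DifferentiableAt ℂ (iteratedDeriv (n + 1) f) (φ z)) :
    deriv (stevicSharmaOp n ψ₁ ψ₂ φ f) z =
      deriv ψ₁ z * iteratedDeriv n f (φ z) +
        (ψ₁ z * deriv φ z + deriv ψ₂ z) * iteratedDeriv (n + 1) f (φ z) +
          ψ₂ z * deriv φ z * iteratedDeriv (n + 2) f (φ z) := by
  have hcomp := hfn.hasDerivAt.comp z hφ.hasDerivAt
  have hcomp' := hfn'.hasDerivAt.comp z hφ.hasDerivAt
  refine ((hψ₁.hasDerivAt.mul hcomp).add (hψ₂.hasDerivAt.mul hcomp')).deriv.trans ?_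
  simp only [Function.comp_apply, ← iteratedDeriv_succ]
  ring

theorem norm_deriv_stevicSharmaOp_le (hψ₁ : DifferentiableAt ℂ ψ₁ z)
    (hψ₂ : DifferentiableAt ℂ ψ₂ z) (hφ : DifferentiableAt ℂ φ z)
    (hfn : DifferentiableAt ℂ (iteratedDeriv n f) (φ z))
    (hfn' : DifferentiableAt ℂ (iteratedDeriv (n + 1) f) (φ z)) :
    ‖deriv (stevicSharmaOp n ψ₁ ψ₂ φ f) z‖ ≤
      ‖deriv ψ₁ z‖ * ‖iteratedDeriv n f (φ z)‖ +
        ‖ψ₁ z * deriv φ z + deriv ψ₂ z‖ * ‖iteratedDeriv (n + 1) f (φ z)‖ +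
          ‖ψ₂ z * deriv φ z‖ * ‖iteratedDeriv (n + 2) f (φ z)‖ := by
  rw [deriv_stevicSharmaOp hψ₁ hψ₂ hφ hfn hfn']
  exact norm_add₃_le.trans_eq (by simp only [norm_mul])

theorem weighted_norm_deriv_stevicSharmaOp_le {U : Set ℂ} (hU : IsOpen U) {μ : ℂ → ℝ}
    {C₁ C₂ C₃ δ : ℝ} (hψ₁ : DifferentiableOn ℂ ψ₁ U) (hψ₂ : DifferentiableOn ℂ ψ₂ U)
    (hφ : DifferentiableOn ℂ φ U) (hφU : MapsTo φ U U) (hf : DifferentiableOn ℂ f U)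
    (hμ : ∀ z ∈ U, 0 ≤ μ z) (hC₁ : ∀ z ∈ U, μ z * ‖deriv ψ₁ z‖ ≤ C₁)
    (hC₂ : ∀ z ∈ U, μ z * ‖ψ₁ z * deriv φ z + deriv ψ₂ z‖ ≤ C₂)
    (hC₃ : ∀ z ∈ U, μ z * ‖ψ₂ z * deriv φ z‖ ≤ C₃)
    (hfn : ∀ z ∈ U, ‖iteratedDeriv n f (φ z)‖ ≤ δ)
    (hfn₁ : ∀ z ∈ U, ‖iteratedDeriv (n + 1) f (φ z)‖ ≤ δ)
    (hfn₂ : ∀ z ∈ U, ‖iteratedDeriv (n + 2) f (φ z)‖ ≤ δ) (hz : z ∈ U) :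
    μ z * ‖deriv (stevicSharmaOp n ψ₁ ψ₂ φ f) z‖ ≤ (C₁ + C₂ + C₃) * δ := by
  have hdiffAt {g : ℂ → ℂ} {w : ℂ} (hg : DifferentiableOn ℂ g U) (hw : w ∈ U) :
      DifferentiableAt ℂ g w :=
    hg.differentiableAt (hU.mem_nhds hw)
  have hder (k : ℕ) := hdiffAt (hf.iteratedDeriv_of_isOpen hU k) (hφU hz)
  have hμz := hμ z hz
  have hnonneg {a : ℂ} {C : ℝ} (h : μ z * ‖a‖ ≤ C) : 0 ≤ C :=
    (mul_nonneg hμz (norm_nonneg a)).trans h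
  calc _ ≤ μ z * (‖deriv ψ₁ z‖ * ‖iteratedDeriv n f (φ z)‖ +
          ‖ψ₁ z * deriv φ z + deriv ψ₂ z‖ * ‖iteratedDeriv (n + 1) f (φ z)‖ +
            ‖ψ₂ z * deriv φ z‖ * ‖iteratedDeriv (n + 2) f (φ z)‖) := by
        gcongr
        exact norm_deriv_stevicSharmaOp_le (hdiffAt hψ₁ hz) (hdiffAt hψ₂ hz) (hdiffAt hφ hz)
          (hder n) (hder (n + 1))
    _ = μ z * ‖deriv ψ₁ z‖ * ‖iteratedDeriv n f (φ z)‖ +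
          μ z * ‖ψ₁ z * deriv φ z + deriv ψ₂ z‖ * ‖iteratedDeriv (n + 1) f (φ z)‖ +
            μ z * ‖ψ₂ z * deriv φ z‖ * ‖iteratedDeriv (n + 2) f (φ z)‖ := by ring
    _ ≤ C₁ * δ + C₂ * δ + C₃ * δ := by
        refine add_le_add (add_le_add ?_ ?_) ?_
        · exact mul_le_mul (hC₁ z hz) (hfn z hz) (norm_nonneg _) (hnonneg (hC₁ z hz))
        · exact mul_le_mul (hC₂ z hz) (hfn₁ z hz) (norm_nonneg _) (hnonneg (hC₂ z hz))
        · exact mul_le_mul (hC₃ z hz) (hfn₂ z hz) (norm_nonneg _) (hnonneg (hC₃ z hz))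
    _ = (C₁ + C₂ + C₃) * δ := by ring

end StevicSharma

theorem stevic_sharma_compact_small_rho_general (ψ₁ ψ₂ φ : ℂ → ℂ)
    (hψ₁ : DifferentiableOn ℂ ψ₁ (ball (0:ℂ) 1))
    (hψ₂ : DifferentiableOn ℂ ψ₂ (ball (0:ℂ) 1))
    (hφ : DifferentiableOn ℂ φ (ball (0:ℂ) 1))
    (ρ : ℝ) (hρ : ρ < 1)
    (hφρ : ∀ z ∈ ball (0:ℂ) 1, ‖(φ z)‖ ≤ ρ)
    (n : ℕ) (μ : ℂ → ℝ) (hμpos : ∀ z ∈ ball (0:ℂ) 1, 0 < μ z)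
    (h1 : ∃ C₁ : ℝ, ∀ z ∈ ball (0:ℂ) 1, μ z * ‖(deriv ψ₁ z)‖ ≤ C₁)
    (h2 : ∃ C₂ : ℝ, ∀ z ∈ ball (0:ℂ) 1,
      μ z * ‖(ψ₁ z * deriv φ z + deriv ψ₂ z)‖ ≤ C₂)
    (h3 : ∃ C₃ : ℝ, ∀ z ∈ ball (0:ℂ) 1, μ z * ‖(ψ₂ z * deriv φ z)‖ ≤ C₃)
    (f : ℕ → ℂ → ℂ) (hf : ∀ i, DifferentiableOn ℂ (f i) (ball (0:ℂ) 1))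
    (hconv : ∀ K ⊆ ball (0:ℂ) 1, IsCompact K → TendstoUniformlyOn f 0 atTop K) :
    ∀ ε > 0, ∃ N : ℕ, ∀ i ≥ N,
      ‖(ψ₁ 0 * iteratedDeriv n (f i) (φ 0) +
          ψ₂ 0 * iteratedDeriv (n + 1) (f i) (φ 0))‖ < ε ∧
      ∀ z ∈ ball (0:ℂ) 1,
        μ z * ‖(deriv (fun z => ψ₁ z * iteratedDeriv n (f i) (φ z) +
            ψ₂ z * iteratedDeriv (n + 1) (f i) (φ z)) z)‖ < ε := by
  obtain ⟨C₁, hC₁⟩ := h1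
  obtain ⟨C₂, hC₂⟩ := h2
  obtain ⟨C₃, hC₃⟩ := h3
  have hf0 : TendstoLocallyUniformlyOn f 0 atTop (ball (0:ℂ) 1) :=
    (tendstoLocallyUniformlyOn_iff_forall_isCompact isOpen_ball).2 hconv
  have hφK : ∀ z ∈ ball (0:ℂ) 1, φ z ∈ closedBall (0:ℂ) ρ :=
    fun z hz => mem_closedBall_zero_iff.2 (hφρ z hz)
  have hK1 : closedBall (0:ℂ) ρ ⊆ ball 0 1 := closedBall_subset_ball hρ
  intro ε hε
  obtain ⟨δ, hδ, hδε⟩ := exists_pos_mul_lt hε (max (‖ψ₁ 0‖ + ‖ψ₂ 0‖) (C₁ + C₂ + C₃))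
  have hsmall (k : ℕ) : ∀ᶠ i in atTop, ∀ z ∈ ball (0:ℂ) 1, ‖iteratedDeriv k (f i) (φ z)‖ ≤ δ :=
    (eventually_forall_norm_iteratedDeriv_lt hf0 (.of_forall hf) isOpen_ball
      (isCompact_closedBall 0 ρ) hK1 k hδ).mono fun _ h z hz => (h _ (hφK z hz)).le
  obtain ⟨N, hN⟩ := eventually_atTop.1 (((hsmall n).and (hsmall (n + 1))).and (hsmall (n + 2)))
  refine ⟨N, fun i hi => ⟨?_, fun z hz => ?_⟩⟩ <;> obtain ⟨⟨hn, hn₁⟩, hn₂⟩ := hN i hi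
  · have h0 : (0:ℂ) ∈ ball 0 1 := mem_ball_self one_pos
    calc _ ≤ ‖ψ₁ 0‖ * ‖iteratedDeriv n (f i) (φ 0)‖ +
          ‖ψ₂ 0‖ * ‖iteratedDeriv (n + 1) (f i) (φ 0)‖ :=
          norm_stevicSharmaOp_le
      _ ≤ (‖ψ₁ 0‖ + ‖ψ₂ 0‖) * δ := by
          rw [add_mul]; gcongr; exacts [hn 0 h0, hn₁ 0 h0]
      _ < ε := (mul_le_mul_of_nonneg_right (le_max_left _ _) hδ.le).trans_lt hδε
  · calc _ ≤ (C₁ + C₂ + C₃) * δ :=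
          weighted_norm_deriv_stevicSharmaOp_le isOpen_ball hψ₁ hψ₂ hφ
            (fun w hw => hK1 (hφK w hw)) (hf i) (fun w hw => (hμpos w hw).le) hC₁ hC₂ hC₃
            hn hn₁ hn₂ hz
      _ < ε := (mul_le_mul_of_nonneg_right (le_max_right _ _) hδ.le).trans_lt hδε

/-- If `ρ = sup |φ| < 1`, the symbols satisfy the natural weighted boundedness conditions,
and `{f_i}` is bounded on the disc of radius `(1+ρ)/2` and tends to `0` uniformly on compact
subsets of `𝔻`, then `‖T^n_{ψ₁,ψ₂,φ} f_i‖_{B_μ} → 0`. -/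
theorem stevic_sharma_compact_small_rho (ψ₁ ψ₂ φ : ℂ → ℂ)
    (hψ₁ : DifferentiableOn ℂ ψ₁ (ball (0:ℂ) 1))
    (hψ₂ : DifferentiableOn ℂ ψ₂ (ball (0:ℂ) 1))
    (hφ : DifferentiableOn ℂ φ (ball (0:ℂ) 1))
    (ρ : ℝ) (hρ : ρ < 1) (hρ0 : 0 ≤ ρ)
    (hφρ : ∀ z ∈ ball (0:ℂ) 1, ‖(φ z)‖ ≤ ρ)
    (n : ℕ) (μ : ℂ → ℝ) (hμpos : ∀ z ∈ ball (0:ℂ) 1, 0 < μ z)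
    (h1 : ∃ C₁ : ℝ, ∀ z ∈ ball (0:ℂ) 1, μ z * ‖(deriv ψ₁ z)‖ ≤ C₁)
    (h2 : ∃ C₂ : ℝ, ∀ z ∈ ball (0:ℂ) 1,
      μ z * ‖(ψ₁ z * deriv φ z + deriv ψ₂ z)‖ ≤ C₂)
    (h3 : ∃ C₃ : ℝ, ∀ z ∈ ball (0:ℂ) 1, μ z * ‖(ψ₂ z * deriv φ z)‖ ≤ C₃)
    (f : ℕ → ℂ → ℂ) (hf : ∀ i, DifferentiableOn ℂ (f i) (ball (0:ℂ) 1))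
    (hbd : ∃ B : ℝ, ∀ i, ∀ z ∈ closedBall (0:ℂ) ((1 + ρ) / 2),
      ‖(f i z)‖ ≤ B)
    (hconv : ∀ K ⊆ ball (0:ℂ) 1, IsCompact K → TendstoUniformlyOn f 0 atTop K) :
    ∀ ε > 0, ∃ N : ℕ, ∀ i ≥ N,
      ‖(ψ₁ 0 * iteratedDeriv n (f i) (φ 0) +
          ψ₂ 0 * iteratedDeriv (n + 1) (f i) (φ 0))‖ < ε ∧
      ∀ z ∈ ball (0:ℂ) 1,
        μ z * ‖(deriv (fun z => ψ₁ z * iteratedDeriv n (f i) (φ z) +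
            ψ₂ z * iteratedDeriv (n + 1) (f i) (φ z)) z)‖ < ε :=
  stevic_sharma_compact_small_rho_general ψ₁ ψ₂ φ hψ₁ hψ₂ hφ ρ hρ hφρ n μ hμpos h1 h2 h3 f hf hconv
end

section
/- Fix w ∈ 𝔻 and integers m ≥ 0, n ≥ 1 with m+1 < n. For each i ∈ {m, m+1, n, n+1} there exists g_i ∈ H^∞(𝔻) with ‖g_i‖_∞ bounded by a constant independent of w, such that for all j ∈ {m, m+1, n, n+1}: g_i^{(j)}(w) = conj(w)^j·δ_{ij}/(1-|w|²)^j (that is, g_i^{(i)}(w) = conj(w)^i/(1-|w|²)^i and g_i^{(j)}(w) = 0 for j ≠ i in the index set). -/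
open Complex Metric Set
open Polynomial ComplexConjugate

/-!
The kernel powers `k_w^k(z) = ((1 - |w|²) / (1 - w̄ z))^k` are bounded by `2^k` on the disc, and
`(k_w^k)^{(j)}(w) = (k)_j (w̄ / (1 - |w|²))^j` with `(k)_j` the rising factorial. Since
`k! (k + 1)_j = j! (j + 1)_k`, the combination `∑ a_k k! k_w^{k+1}` has `j`-th derivative
`(w̄ / (1 - |w|²))^j j! P(j + 1)` at `w`, where `P = ∑ a_k (X)_k`. The rising factorials span
`ℂ[X]`, so `P` can be any polynomial, e.g. a Lagrange basis polynomial for the nodes `j + 1`;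
its coefficients, and hence the sup-norm bound, do not depend on `w`.
-/

section
variable {𝕜 : Type*} [NontriviallyNormedField 𝕜]

theorem hasDerivAt_one_sub_mul_zpow (c : 𝕜) (e : ℤ) {z : 𝕜} (hz : 1 - c * z ≠ 0) :
    HasDerivAt (fun z => (1 - c * z) ^ e) (-(e * c) * (1 - c * z) ^ (e - 1)) z := by
  have hlin : HasDerivAt (fun z => 1 - c * z) (-c) z := by
    simpa using ((hasDerivAt_id z).const_mul c).const_sub 1
  rw [show -(e * c) * (1 - c * z) ^ (e - 1) = e * (1 - c * z) ^ (e - 1) * -c by ring]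
  exact (hasDerivAt_zpow e _ (Or.inl hz)).comp z hlin

theorem iteratedDeriv_one_sub_mul_zpow_neg (c : 𝕜) (k j : ℕ) {z : 𝕜} (hz : 1 - c * z ≠ 0) :
    iteratedDeriv j (fun z => (1 - c * z) ^ (-(k : ℤ))) z =
      (ascPochhammer 𝕜 j).eval (k : 𝕜) * c ^ j * (1 - c * z) ^ (-((k + j : ℕ) : ℤ)) := by
  induction j generalizing z with
  | zero => simp
  | succ j ih =>
    have hU : IsOpen {y : 𝕜 | 1 - c * y ≠ 0} :=
      isOpen_ne_fun (by fun_prop) continuous_const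
    have heq : iteratedDeriv j (fun z => (1 - c * z) ^ (-(k : ℤ))) =ᶠ[nhds z]
        fun y => (ascPochhammer 𝕜 j).eval (k : 𝕜) * c ^ j * (1 - c * y) ^ (-((k + j : ℕ) : ℤ)) :=
      Filter.eventuallyEq_of_mem (hU.mem_nhds hz) fun y hy => ih hy
    rw [iteratedDeriv_succ, heq.deriv_eq,
      ((hasDerivAt_one_sub_mul_zpow c _ hz).const_mul _).deriv, ascPochhammer_succ_eval]
    push_cast
    ring_nf

end

noncomputable def ascPochhammerSequence (R : Type*) [Semiring R] [Nontrivial R]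
    [NoZeroDivisors R] : Polynomial.Sequence R where
  elems' := ascPochhammer R
  degree_eq' k := by
    rw [degree_eq_natDegree (monic_ascPochhammer R k).ne_zero, ascPochhammer_natDegree]

@[simp]
theorem ascPochhammerSequence_apply (R : Type*) [Semiring R] [Nontrivial R] [NoZeroDivisors R]
    (k : ℕ) :    ascPochhammerSequence R k = ascPochhammer R k :=
  rfl

theorem ascPochhammer_eval_succ_mul_factorial (R : Type*) [Semiring R] (j k : ℕ) :
    (ascPochhammer R j).eval ((k + 1 : ℕ) : R) * k.factorial =
      (ascPochhammer R k).eval ((j + 1 : ℕ) : R) * j.factorial := by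
  rw [ascPochhammer_nat_eq_natCast_ascFactorial, ascPochhammer_nat_eq_natCast_ascFactorial]
  norm_cast
  rw [mul_comm, Nat.factorial_mul_ascFactorial, mul_comm, Nat.factorial_mul_ascFactorial, add_comm]

theorem one_sub_sq_norm_le_two_mul_norm_one_sub_conj_mul {w z : ℂ} (hw : ‖w‖ < 1)
    (hz : ‖z‖ < 1) : 1 - ‖w‖ ^ 2 ≤ 2 * ‖1 - conj w * z‖ := by
  have hwz : ‖conj w * z‖ ≤ ‖w‖ := by
    rw [norm_mul, norm_conj]
    nlinarith [norm_nonneg w, norm_nonneg z]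
  have := norm_sub_norm_le (1 : ℂ) (conj w * z)
  rw [norm_one] at this
  nlinarith [norm_nonneg w]

theorem one_sub_conj_mul_ne_zero {w z : ℂ} (hw : ‖w‖ < 1) (hz : ‖z‖ < 1) :
    1 - conj w * z ≠ 0 := by
  have hwz : ‖conj w * z‖ < 1 := by
    rw [norm_mul, norm_conj]
    nlinarith [norm_nonneg w, norm_nonneg z]
  intro h
  rw [← sub_eq_zero.mp h, norm_one] at hwz
  exact lt_irrefl _ hwz

noncomputable def kernelPow (w : ℂ) (k : ℕ) (z : ℂ) : ℂ :=
  (((1 - ‖w‖ ^ 2 : ℝ) : ℂ) / (1 - conj w * z)) ^ k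

section kernelPow

variable {w : ℂ} (k : ℕ)

theorem kernelPow_eq_mul_zpow :
    kernelPow w k = fun z => ((1 - ‖w‖ ^ 2 : ℝ) : ℂ) ^ k * (1 - conj w * z) ^ (-(k : ℤ)) := by
  funext z
  rw [kernelPow, div_pow, zpow_neg, zpow_natCast, div_eq_mul_inv]

theorem differentiableOn_kernelPow (hw : ‖w‖ < 1) :
    DifferentiableOn ℂ (kernelPow w k) (ball 0 1) := by
  intro z hz
  have := one_sub_conj_mul_ne_zero hw (mem_ball_zero_iff.mp hz)
  unfold kernelPow
  fun_prop (disch := assumption)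

theorem contDiffAt_kernelPow (hw : ‖w‖ < 1) (n : WithTop ℕ∞) :
    ContDiffAt ℂ n (kernelPow w k) w := by
  have := one_sub_conj_mul_ne_zero hw hw
  unfold kernelPow
  fun_prop (disch := assumption)

theorem norm_kernelPow_le (hw : ‖w‖ < 1) {z : ℂ} (hz : ‖z‖ < 1) : ‖kernelPow w k z‖ ≤ 2 ^ k := by
  have hρ : 0 ≤ 1 - ‖w‖ ^ 2 := by nlinarith [norm_nonneg w]
  rw [kernelPow, norm_pow, norm_div, norm_real, Real.norm_of_nonneg hρ]
  gcongr
  rw [div_le_iff₀ (norm_pos_iff.mpr (one_sub_conj_mul_ne_zero hw hz))]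
  linarith [one_sub_sq_norm_le_two_mul_norm_one_sub_conj_mul hw hz]

theorem iteratedDeriv_kernelPow (hw : ‖w‖ < 1) (j : ℕ) :
    iteratedDeriv j (kernelPow w k) w =
      (ascPochhammer ℂ j).eval (k : ℂ) * (conj w / ((1 - ‖w‖ ^ 2 : ℝ) : ℂ)) ^ j := by
  have hρ : 1 - conj w * w = ((1 - ‖w‖ ^ 2 : ℝ) : ℂ) := by
    rw [conj_mul']; push_cast; ring
  have hρ0 : ((1 - ‖w‖ ^ 2 : ℝ) : ℂ) ≠ 0 := hρ ▸ one_sub_conj_mul_ne_zero hw hw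
  rw [kernelPow_eq_mul_zpow, iteratedDeriv_const_mul_field,
    iteratedDeriv_one_sub_mul_zpow_neg _ _ _ (one_sub_conj_mul_ne_zero hw hw), hρ, zpow_neg,
    zpow_natCast, pow_add, div_pow]
  field_simp

end kernelPow

theorem exists_bounded_iteratedDeriv_eq_eval (P : ℂ[X]) :
    ∃ C : ℝ, ∀ w ∈ ball (0 : ℂ) 1, ∃ g : ℂ → ℂ, DifferentiableOn ℂ g (ball 0 1) ∧
      (∀ z ∈ ball 0 1, ‖g z‖ ≤ C) ∧
      ∀ j : ℕ, iteratedDeriv j g w =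
        (conj w / ((1 - ‖w‖ ^ 2 : ℝ) : ℂ)) ^ j * j.factorial * P.eval ((j + 1 : ℕ) : ℂ) := by
  have hspan := (ascPochhammerSequence ℂ).span fun k => by
    simp [(monic_ascPochhammer ℂ k).leadingCoeff]
  obtain ⟨a, hPa⟩ :=
    Finsupp.mem_span_range_iff_exists_finsupp.mp (hspan ▸ Submodule.mem_top (x := P))
  refine ⟨∑ k ∈ a.support, ‖a k‖ * k.factorial * 2 ^ (k + 1), fun w hw => ?_⟩
  rw [mem_ball_zero_iff] at hw
  refine ⟨fun z => ∑ k ∈ a.support, a k * k.factorial * kernelPow w (k + 1) z, ?_, ?_, ?_⟩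
  · exact DifferentiableOn.fun_sum fun k _ =>
      (differentiableOn_kernelPow (k + 1) hw).const_mul _
  · intro z hz
    refine (norm_sum_le _ _).trans (Finset.sum_le_sum fun k _ => ?_)
    rw [norm_mul, norm_mul, Complex.norm_natCast]
    gcongr
    exact norm_kernelPow_le _ hw (mem_ball_zero_iff.mp hz)
  · intro j
    rw [iteratedDeriv_fun_sum fun k _ =>
        contDiffAt_const.mul (contDiffAt_kernelPow (k + 1) hw j),
      ← hPa, Finsupp.sum, eval_finsetSum, Finset.mul_sum]
    refine Finset.sum_congr rfl fun k _ => ?_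
    rw [iteratedDeriv_const_mul_field, iteratedDeriv_kernelPow _ hw, eval_smul, smul_eq_mul,
      ascPochhammerSequence_apply]
    linear_combination (a k * (conj w / ((1 - ‖w‖ ^ 2 : ℝ) : ℂ)) ^ j) *
      ascPochhammer_eval_succ_mul_factorial ℂ j k

theorem exists_bounded_iteratedDeriv_eq_ite (S : Finset ℕ) :
    ∃ C : ℝ, 0 < C ∧ ∀ w ∈ ball (0 : ℂ) 1, ∀ i ∈ S,
      ∃ g : ℂ → ℂ, DifferentiableOn ℂ g (ball (0 : ℂ) 1) ∧
        (∀ z ∈ ball (0 : ℂ) 1, ‖g z‖ ≤ C) ∧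
        ∀ j ∈ S, iteratedDeriv j g w =
          if j = i then conj w ^ i / ((1 - ‖w‖ ^ 2 : ℝ) : ℂ) ^ i else 0 := by
  let node : ℕ → ℂ := fun j => ((j + 1 : ℕ) : ℂ)
  have hnode : Set.InjOn node S :=
    (Nat.cast_injective.comp (add_left_injective 1)).injOn
  choose B hB using fun i =>
    exists_bounded_iteratedDeriv_eq_eval (C (i.factorial : ℂ)⁻¹ * Lagrange.basis S node i)
  refine ⟨∑ i ∈ S, |B i| + 1, by positivity, fun w hw i hi => ?_⟩
  obtain ⟨g, hg, hgC, hgj⟩ := hB i w hw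
  refine ⟨g, hg, fun z hz => ?_, fun j hj => ?_⟩
  · calc ‖g z‖ ≤ |B i| := (hgC z hz).trans (le_abs_self _)
      _ ≤ ∑ i ∈ S, |B i| := Finset.single_le_sum (fun i _ => abs_nonneg (B i)) hi
      _ ≤ ∑ i ∈ S, |B i| + 1 := le_add_of_nonneg_right zero_le_one
  have hj! : (j.factorial : ℂ) ≠ 0 := Nat.cast_ne_zero.mpr j.factorial_ne_zero
  rw [hgj, eval_mul, eval_C, show ((j + 1 : ℕ) : ℂ) = node j from rfl]
  split_ifs with hji
  · subst hji
    rw [Lagrange.eval_basis_self hnode hj, div_pow]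
    field_simp
  · rw [Lagrange.eval_basis_of_ne (Ne.symm hji) hj, mul_zero, mul_zero]

theorem hinf_test_functions_general (m n : ℕ) :
    ∃ C : ℝ, 0 < C ∧ ∀ w ∈ ball (0:ℂ) 1, ∀ i ∈ ({m, m + 1, n, n + 1} : Set ℕ),
      ∃ g : ℂ → ℂ, DifferentiableOn ℂ g (ball (0:ℂ) 1) ∧
        (∀ z ∈ ball (0:ℂ) 1, ‖g z‖ ≤ C) ∧
        ∀ j ∈ ({m, m + 1, n, n + 1} : Set ℕ),
          iteratedDeriv j g w =
            if j = i then ((starRingEnd ℂ) w) ^ i / ((1 - ‖w‖ ^ 2 : ℝ) : ℂ) ^ i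
            else 0 := by
  have := exists_bounded_iteratedDeriv_eq_ite {m, m + 1, n, n + 1}
  simp only [← Finset.mem_coe, Finset.coe_insert, Finset.coe_singleton] at this
  exact this

/-- Test functions in `H^∞` whose derivatives of orders `m, m+1, n, n+1` at `w`
interpolate Kronecker-delta values, with sup-norm bound independent of `w`. -/
theorem hinf_test_functions (m n : ℕ) (hn : 1 ≤ n) (hmn : m + 1 < n) :
    ∃ C : ℝ, 0 < C ∧ ∀ w ∈ ball (0:ℂ) 1, ∀ i ∈ ({m, m + 1, n, n + 1} : Set ℕ),
      ∃ g : ℂ → ℂ, DifferentiableOn ℂ g (ball (0:ℂ) 1) ∧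
        (∀ z ∈ ball (0:ℂ) 1, ‖g z‖ ≤ C) ∧
        ∀ j ∈ ({m, m + 1, n, n + 1} : Set ℕ),
          iteratedDeriv j g w =
            if j = i then ((starRingEnd ℂ) w) ^ i / ((1 - ‖w‖ ^ 2 : ℝ) : ℂ) ^ i
            else 0 :=
  hinf_test_functions_general m n
end
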